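/- Let λ be a partition of a positive integer n, 𝝀 its d-fold dilation (a partition of d²n), and α a sequence of positive d-divisible integers summing to d²n. Then the pairing (σ, C) ↦ C·Φ(σ)^{-1}, where Φ(σ) is the block-diagonal matrix with λ₁ + ℓ(λ) copies of the d×d permutation matrix of σ, defines a group action of S_d on the set 𝒞(𝝀, α) of cascades of shape 𝝀 and content α. -/

import Mathlib

/-- Murnaghan–Nakayama recursion on beta-sets: `MNchar S α` computes the character
value via successive rim-hook (border-strip) removals encoded by beta-numbers. -/
def MNchar : Finset ℕ → List ℕ → ℤ
  | S, [] => if S = Finset.range S.card then 1 else 0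
  | S, k :: rest =>
      ∑ s ∈ S.filter (fun s => k ≤ s ∧ s - k ∉ S),
        (-1 : ℤ) ^ (S.filter (fun t => s - k < t ∧ t < s)).card *
          MNchar (insert (s - k) (S.erase s)) rest

/-- Canonical beta-set of a partition (given as a multiset of parts). -/
def betaSet (P : Multiset ℕ) : Finset ℕ :=
  ((List.range (P.sort (· ≤ ·)).length).map
    (fun i => (P.sort (· ≤ ·)).getD i 0 + i)).toFinset

/-- Irreducible character of the symmetric group indexed by `lam`, at cycle type `mu`. -/
def chi (lam mu : Multiset ℕ) : ℤ := MNchar (betaSet lam) (mu.sort (· ≤ ·))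

/-- d-fold dilation of a partition: each part p becomes d copies of d*p. -/
def dilate (d : ℕ) (P : Multiset ℕ) : Multiset ℕ :=
  P.bind fun p => Multiset.replicate d (d * p)

/-- Scale every part of a partition by d. -/
def scale (d : ℕ) (P : Multiset ℕ) : Multiset ℕ := P.map (d * ·)

def IsPartitionOf (n : ℕ) (P : Multiset ℕ) : Prop := (∀ p ∈ P, 0 < p) ∧ P.sum = n

def zerosBefore (β : List Bool) (j : ℕ) : ℕ := (β.take j).count false

/-- Shape of a binary sequence: one part for each `true`, equal to the number of
`false`s to its left (zero parts discarded). -/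
def shapeOf (β : List Bool) : Multiset ℕ :=
  ↑((List.range β.length).filterMap fun j =>
      if β.getD j false = true ∧ 0 < zerosBefore β j then some (zerosBefore β j) else none)

/-- The word of a partition: the unique binary sequence starting with 0 and ending
with 1 whose shape is the partition. -/
def word (P : Multiset ℕ) : List Bool :=
  (List.range (P.sup + Multiset.card P)).map fun j => decide (j ∈ betaSet P)

/-- Cells of the Young diagram of a partition. -/
def cells (P : Multiset ℕ) : Finset (ℕ × ℕ) :=
  (Finset.range (Multiset.card P) ×ˢ Finset.range (P.sup + 1)).filter
    fun x => x.2 < ((P.sort (· ≤ ·)).reverse.getD x.1 0)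

def CellAdj (x y : ℕ × ℕ) : Prop :=
  (x.1 = y.1 ∧ (x.2 = y.2 + 1 ∨ y.2 = x.2 + 1)) ∨
  (x.2 = y.2 ∧ (x.1 = y.1 + 1 ∨ y.1 = x.1 + 1))

/-- A set of cells is a rim hook: nonempty, connected, no 2×2 square. -/
def IsRimHook (s : Finset (ℕ × ℕ)) : Prop :=
  s.Nonempty ∧
  (∀ x ∈ s, ∀ y ∈ s, Relation.ReflTransGen (fun u v => v ∈ s ∧ CellAdj u v) x y) ∧
  ∀ i j : ℕ, ¬((i, j) ∈ s ∧ (i + 1, j) ∈ s ∧ (i, j + 1) ∈ s ∧ (i + 1, j + 1) ∈ s)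

/-- A cascade, encoded by its first row and the sequence of 0-1 swap positions
`(aᵢ, bᵢ)` relating consecutive rows. -/
structure Cascade where
  top : List Bool
  swaps : List (ℕ × ℕ)

def applySwaps (r : List Bool) (s : List (ℕ × ℕ)) : List Bool :=
  s.foldl (fun r ab => (r.set ab.1 true).set ab.2 false) r

def cascadeRow (C : Cascade) (i : ℕ) : List Bool := applySwaps C.top (C.swaps.take i)

def cascadeBot (C : Cascade) : List Bool := applySwaps C.top C.swaps

/-- The defining conditions of a cascade. -/
def Cascade.Valid (C : Cascade) : Prop :=
  C.top.head? = some false ∧ C.top.getLast? = some true ∧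
  (∀ i < C.swaps.length,
    (C.swaps.getD i (0, 0)).1 < (C.swaps.getD i (0, 0)).2 ∧
    (C.swaps.getD i (0, 0)).2 < (cascadeRow C i).length ∧
    (cascadeRow C i).getD (C.swaps.getD i (0, 0)).1 true = false ∧
    (cascadeRow C i).getD (C.swaps.getD i (0, 0)).2 false = true) ∧
  ∃ u v, cascadeBot C = List.replicate u true ++ List.replicate v false

def cascadeShape (C : Cascade) : Multiset ℕ := shapeOf C.top

def cascadeContent (C : Cascade) : List ℕ := C.swaps.map fun ab => ab.2 - ab.1

/-- Crossings of a cascade: pairs (i,j) with row i having a 1 in position j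
strictly between the swapped positions aᵢ < j < bᵢ. -/
def cascadeCrossings (C : Cascade) : Finset (ℕ × ℕ) :=
  (Finset.range C.swaps.length ×ˢ Finset.range C.top.length).filter fun ij =>
    (cascadeRow C ij.1).getD ij.2 false = true ∧
    (C.swaps.getD ij.1 (0, 0)).1 < ij.2 ∧ ij.2 < (C.swaps.getD ij.1 (0, 0)).2

def cascadeWt (C : Cascade) : ℤ := (-1) ^ (cascadeCrossings C).card

def traceSwaps (s : List (ℕ × ℕ)) (p : ℕ) : ℕ :=
  s.foldl (fun p ab => if p = ab.1 then ab.2 else if p = ab.2 then ab.1 else p) p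

/-- The path starting in column x: its position after i swaps. -/
def cascadePath (C : Cascade) (x i : ℕ) : ℕ := traceSwaps (C.swaps.take i) x

def onesPositions (r : List Bool) : List ℕ :=
  (List.range r.length).filter fun j => r.getD j false

/-- The permutation π_C associated to a cascade, as a function on {0,…,k−1}. -/
def cascadePerm (C : Cascade) (j : ℕ) : ℕ :=
  (onesPositions (cascadeBot C)).idxOf
    (traceSwaps C.swaps ((onesPositions C.top).getD j 0))

/-- Sign of a function on {0,…,k−1} via inversion count. -/
def signOf (f : ℕ → ℕ) (k : ℕ) : ℤ :=
  (-1) ^ ((Finset.range k ×ˢ Finset.range k).filter fun p =>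
      p.1 < p.2 ∧ f p.2 < f p.1).card

/-- Crossings of the two paths starting in columns x and y. -/
def pathCrossings (C : Cascade) (x y : ℕ) : Finset (ℕ × ℕ) :=
  (Finset.range C.swaps.length ×ˢ Finset.range C.top.length).filter fun ij =>
    cascadePath C x ij.1 = ij.2 ∧ cascadePath C x ij.1 < cascadePath C y ij.1 ∧
    cascadePath C y (ij.1 + 1) < cascadePath C x (ij.1 + 1)

def rimRows (s : Finset (ℕ × ℕ)) : ℕ := (s.image Prod.fst).card

/-- A rim hook tableau, as the chain of successive shapes λ¹ ⊃ … ⊃ λ^{m+1} = ∅. -/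
def IsRHT (T : List (Multiset ℕ)) : Prop :=
  2 ≤ T.length ∧ (∀ P ∈ T, ∀ p ∈ P, 0 < p) ∧ T.getLast? = some 0 ∧
  ∀ i, i + 1 < T.length →
    cells (T.getD (i + 1) 0) ⊆ cells (T.getD i 0) ∧
    IsRimHook (cells (T.getD i 0) \ cells (T.getD (i + 1) 0))

def tabShape (T : List (Multiset ℕ)) : Multiset ℕ := T.headI

def tabContent (T : List (Multiset ℕ)) : List ℕ :=
  (List.range (T.length - 1)).map fun i =>
    (cells (T.getD i 0) \ cells (T.getD (i + 1) 0)).card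

def tabWt (T : List (Multiset ℕ)) : ℤ :=
  ∏ i ∈ Finset.range (T.length - 1),
    (-1 : ℤ) ^ (rimRows (cells (T.getD i 0) \ cells (T.getD (i + 1) 0)) - 1)

/-- Θ : cascades → rim hook tableaux, via the shapes of the successive rows. -/
def theta (C : Cascade) : List (Multiset ℕ) :=
  (List.range (C.swaps.length + 1)).map fun i => shapeOf (cascadeRow C i)

/-- The block column permutation: j = i + d·k with i < d goes to σ(i) + d·k. -/
def gammaMap (d : ℕ) (σ : Equiv.Perm (Fin d)) (j : ℕ) : ℕ :=
  if h : 0 < d then d * (j / d) + (σ ⟨j % d, Nat.mod_lt j h⟩ : ℕ) else j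

def permuteCols (d : ℕ) (σ : Equiv.Perm (Fin d)) (r : List Bool) : List Bool :=
  (List.range r.length).map fun j => r.getD (gammaMap d σ⁻¹ j) false

/-- The action of σ ∈ S_d on a cascade: permute columns within blocks of size d. -/
def actC (d : ℕ) (σ : Equiv.Perm (Fin d)) (C : Cascade) : Cascade :=
  ⟨permuteCols d σ C.top, C.swaps.map fun ab => (gammaMap d σ ab.1, gammaMap d σ ab.2)⟩

/-!
The beta-set of the dilation `dilate d λ` is the union of the blocks `[d b, d b + d)` over the
beta-numbers `b` of `λ`, so the first row of a cascade of that shape (its word) is constant on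
blocks of `d` columns and has length divisible by `d`. Swaps preserve the number of ones, which
for the first row is `d ℓ(λ)`; hence the last row `1^u 0^v` has `d ∣ u` and is block-constant
too. Both rows are therefore fixed by `Φ(σ)`, and since every swap distance is a multiple of
`d`, conjugating the swaps by `Φ(σ)` keeps them 0–1 swaps at the same distances.
-/

section BlockPermutation

variable {d : ℕ}

lemma gammaMap_of_pos (hd : 0 < d) (σ : Equiv.Perm (Fin d)) (j : ℕ) :
    gammaMap d σ j = d * (j / d) + (σ ⟨j % d, Nat.mod_lt j hd⟩ : ℕ) := by
  simp [gammaMap, hd]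

lemma gammaMap_zero (σ : Equiv.Perm (Fin 0)) (j : ℕ) : gammaMap 0 σ j = j := by
  simp [gammaMap]

lemma gammaMap_div (σ : Equiv.Perm (Fin d)) (j : ℕ) : gammaMap d σ j / d = j / d := by
  rcases d.eq_zero_or_pos with rfl | hd
  · simp
  rw [gammaMap_of_pos hd, Nat.mul_add_div hd, Nat.div_eq_of_lt (Fin.is_lt _), Nat.add_zero]

lemma gammaMap_mod (hd : 0 < d) (σ : Equiv.Perm (Fin d)) (j : ℕ) :
    gammaMap d σ j % d = (σ ⟨j % d, Nat.mod_lt j hd⟩ : ℕ) := by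
  rw [gammaMap_of_pos hd, Nat.mul_add_mod, Nat.mod_eq_of_lt (Fin.is_lt _)]

lemma gammaMap_one (j : ℕ) : gammaMap d 1 j = j := by
  rcases d.eq_zero_or_pos with rfl | hd
  · exact gammaMap_zero 1 j
  rw [gammaMap_of_pos hd]
  exact Nat.div_add_mod j d

lemma gammaMap_mul (σ τ : Equiv.Perm (Fin d)) (j : ℕ) :
    gammaMap d (σ * τ) j = gammaMap d σ (gammaMap d τ j) := by
  rcases d.eq_zero_or_pos with rfl | hd
  · simp only [gammaMap_zero]
  have hmod : (⟨gammaMap d τ j % d, Nat.mod_lt _ hd⟩ : Fin d) =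
      τ ⟨j % d, Nat.mod_lt j hd⟩ := Fin.ext (gammaMap_mod hd τ j)
  rw [gammaMap_of_pos hd σ, gammaMap_div, hmod, gammaMap_of_pos hd, Equiv.Perm.mul_apply]

@[simp]
lemma gammaMap_inv_apply (σ : Equiv.Perm (Fin d)) (j : ℕ) :
    gammaMap d σ⁻¹ (gammaMap d σ j) = j := by
  rw [← gammaMap_mul, inv_mul_cancel, gammaMap_one]

@[simp]
lemma gammaMap_apply_inv (σ : Equiv.Perm (Fin d)) (j : ℕ) :
    gammaMap d σ (gammaMap d σ⁻¹ j) = j := by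
  simpa using gammaMap_inv_apply σ⁻¹ j

lemma gammaMap_eq_iff (σ : Equiv.Perm (Fin d)) {i j : ℕ} :
    gammaMap d σ i = j ↔ i = gammaMap d σ⁻¹ j := by
  constructor <;> rintro rfl
  exacts [(gammaMap_inv_apply σ i).symm, gammaMap_apply_inv σ j]

lemma gammaMap_lt_iff (σ : Equiv.Perm (Fin d)) {j m : ℕ} (hm : d ∣ m) :
    gammaMap d σ j < m ↔ j < m := by
  rcases d.eq_zero_or_pos with rfl | hd
  · rw [gammaMap_zero]
  obtain ⟨k, rfl⟩ := hm
  rw [mul_comm d k, ← Nat.div_lt_iff_lt_mul hd, ← Nat.div_lt_iff_lt_mul hd, gammaMap_div]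

lemma gammaMap_add_of_dvd (σ : Equiv.Perm (Fin d)) (a : ℕ) {c : ℕ} (hc : d ∣ c) :
    gammaMap d σ (a + c) = gammaMap d σ a + c := by
  rcases d.eq_zero_or_pos with rfl | hd
  · simp only [gammaMap_zero]
  obtain ⟨e, rfl⟩ := hc
  have hmod : (⟨(a + d * e) % d, Nat.mod_lt _ hd⟩ : Fin d) = ⟨a % d, Nat.mod_lt _ hd⟩ :=
    Fin.ext (Nat.add_mul_mod_self_left a d e)
  rw [gammaMap_of_pos hd, gammaMap_of_pos hd, hmod, Nat.add_mul_div_left _ _ hd]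
  ring

end BlockPermutation

section PermuteCols

variable {d : ℕ}

@[simp]
lemma length_permuteCols (σ : Equiv.Perm (Fin d)) (r : List Bool) :
    (permuteCols d σ r).length = r.length := by
  simp [permuteCols]

lemma getElem?_permuteCols (σ : Equiv.Perm (Fin d)) {r : List Bool} (hr : d ∣ r.length)
    (j : ℕ) : (permuteCols d σ r)[j]? = r[gammaMap d σ⁻¹ j]? := by
  by_cases hj : j < r.length
  · have hj' : gammaMap d σ⁻¹ j < r.length := (gammaMap_lt_iff _ hr).2 hj
    simp [permuteCols, hj, hj']
  · have hj' : ¬gammaMap d σ⁻¹ j < r.length := (gammaMap_lt_iff _ hr).not.2 hj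
    simp [permuteCols, hj, hj']

lemma getD_permuteCols_gammaMap (σ : Equiv.Perm (Fin d)) {r : List Bool} (hr : d ∣ r.length)
    (j : ℕ) (x : Bool) :
    (permuteCols d σ r).getD (gammaMap d σ j) x = r.getD j x := by
  rw [List.getD_eq_getElem?_getD, getElem?_permuteCols σ hr, gammaMap_inv_apply,
    ← List.getD_eq_getElem?_getD]

lemma permuteCols_one (r : List Bool) : permuteCols d 1 r = r := by
  refine List.ext_getElem (length_permuteCols 1 r) fun j _ hj => ?_
  simp [permuteCols, gammaMap_one, hj]

lemma permuteCols_mul (σ τ : Equiv.Perm (Fin d)) {r : List Bool} (hr : d ∣ r.length) :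
    permuteCols d (σ * τ) r = permuteCols d σ (permuteCols d τ r) := by
  refine List.ext_getElem? fun j => ?_
  rw [getElem?_permuteCols _ hr, getElem?_permuteCols _ (by simpa using hr),
    getElem?_permuteCols _ hr, mul_inv_rev, gammaMap_mul]

lemma permuteCols_set (σ : Equiv.Perm (Fin d)) {r : List Bool} (hr : d ∣ r.length)
    (p : ℕ) (v : Bool) :
    permuteCols d σ (r.set p v) = (permuteCols d σ r).set (gammaMap d σ p) v := by
  refine List.ext_getElem? fun j => ?_
  rw [getElem?_permuteCols _ (by simpa using hr), List.getElem?_set, List.getElem?_set,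
    getElem?_permuteCols _ hr, length_permuteCols]
  simp only [gammaMap_lt_iff _ hr, gammaMap_eq_iff, eq_comm (a := p)]

lemma permuteCols_applySwaps (σ : Equiv.Perm (Fin d)) {r : List Bool} (hr : d ∣ r.length)
    (s : List (ℕ × ℕ)) :
    permuteCols d σ (applySwaps r s) =
      applySwaps (permuteCols d σ r)
        (s.map fun ab => (gammaMap d σ ab.1, gammaMap d σ ab.2)) := by
  induction s generalizing r with
  | nil => rfl
  | cons ab s ih =>
    simp only [applySwaps, List.map_cons, List.foldl_cons] at ih ⊢
    rw [ih (by simpa using hr), permuteCols_set σ (by simpa using hr), permuteCols_set σ hr]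

end PermuteCols

section BlockConstant

def IsBlockConst (d : ℕ) (r : List Bool) : Prop :=
  ∀ i j, i / d = j / d → r.getD i false = r.getD j false

variable {d : ℕ}

lemma IsBlockConst.permuteCols_eq {r : List Bool} (h : IsBlockConst d r)
    (σ : Equiv.Perm (Fin d)) : permuteCols d σ r = r := by
  refine List.ext_getElem (length_permuteCols σ r) fun j _ hj => ?_
  simp only [permuteCols, List.getElem_map, List.getElem_range]
  rw [h _ j (gammaMap_div σ⁻¹ j), List.getD_eq_getElem _ _ hj]

lemma IsBlockConst.dvd_length (hd : 0 < d) {r : List Bool} (h : IsBlockConst d r)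
    (hlast : r.getLast? = some true) : d ∣ r.length := by
  have hpos : 0 < r.length := List.length_pos_iff.2 (by rintro rfl; simp at hlast)
  set q := (r.length - 1) / d
  have hlast' : r.getD (r.length - 1) false = true := by
    rw [List.getD_eq_getElem?_getD, ← List.getLast?_eq_getElem?, hlast, Option.getD_some]
  -- the block of the last column is all ones, so it ends inside the row
  have hend : r.getD (d * q + (d - 1)) false = true := by
    rw [h _ (r.length - 1) (by rw [Nat.mul_add_div hd, Nat.div_eq_of_lt (by omega)]; rfl),
      hlast']
  have hlt : d * q + (d - 1) < r.length := by
    by_contra hge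
    rw [List.getD_eq_default _ _ (not_lt.1 hge)] at hend
    exact Bool.false_ne_true hend
  have hupper : r.length - 1 < d * q + d := by
    simpa [Nat.mul_add] using Nat.lt_mul_div_succ (r.length - 1) hd
  exact ⟨q + 1, by rw [Nat.mul_add]; omega⟩

lemma getD_replicate_append (u v j : ℕ) :
    (List.replicate u true ++ List.replicate v false).getD j false = decide (j < u) := by
  by_cases hj : j < u
  · rw [List.getD_append _ _ _ _ (by simpa using hj), List.getD_replicate _ hj, decide_eq_true hj]
  · rw [List.getD_append_right _ _ _ _ (by simpa using hj), decide_eq_false hj]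
    rw [List.getD_eq_getElem?_getD, List.getElem?_replicate]
    split_ifs <;> rfl

lemma isBlockConst_replicate_append {u : ℕ} (hu : d ∣ u) (v : ℕ) :
    IsBlockConst d (List.replicate u true ++ List.replicate v false) := by
  intro i j hij
  rw [getD_replicate_append, getD_replicate_append]
  rcases d.eq_zero_or_pos with rfl | hd
  · simp [zero_dvd_iff.1 hu]
  obtain ⟨k, rfl⟩ := hu
  simp only [mul_comm d k, ← Nat.div_lt_iff_lt_mul hd, hij]

end BlockConstant

section Words

lemma mem_onesPositions {r : List Bool} {j : ℕ} :
    j ∈ onesPositions r ↔ j < r.length ∧ r.getD j false = true := by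
  simp [onesPositions]

lemma pairwise_lt_onesPositions (r : List Bool) : (onesPositions r).Pairwise (· < ·) :=
  List.pairwise_lt_range.filter _

lemma length_onesPositions (r : List Bool) : (onesPositions r).length = r.count true := by
  induction r with
  | nil => rfl
  | cons b t ih =>
    unfold onesPositions at *
    rw [List.length_cons, List.range_succ_eq_map, List.filter_cons, List.filter_map]
    simp only [Function.comp_def, Nat.succ_eq_add_one, List.getD_cons_succ, List.getD_cons_zero]
    cases b <;> simpa [List.count_cons] using ih

lemma onesPositions_take (r : List Bool) {p : ℕ} (hp : p ≤ r.length) :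
    onesPositions (r.take p) = (List.range p).filter fun j => r.getD j false := by
  rw [onesPositions, List.length_take, min_eq_left hp]
  refine List.filter_congr fun j hj => ?_
  rw [List.getD_eq_getElem?_getD, List.getElem?_take_of_lt (List.mem_range.1 hj),
    ← List.getD_eq_getElem?_getD]

lemma length_filter_range_getElem_onesPositions (r : List Bool) {k : ℕ}
    (hk : k < (onesPositions r).length) :
    ((List.range (onesPositions r)[k]).filter fun j => r.getD j false).length = k := by
  set m := (onesPositions r)[k]
  obtain ⟨hm, hone⟩ := mem_onesPositions.1 (List.getElem_mem hk)
  set before := (List.range m).filter fun j => r.getD j false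
  obtain ⟨after, hsplit⟩ : ∃ after, onesPositions r = before ++ m :: after := by
    rw [onesPositions, show r.length = m + (r.length - m - 1 + 1) by omega, List.range_add,
      List.range_succ_eq_map, List.map_cons, List.filter_append, Nat.add_zero,
      List.filter_cons_of_pos (by simpa using hone)]
    exact ⟨_, rfl⟩
  have hnodup := (pairwise_lt_onesPositions r).nodup
  have hlen : before.length < (onesPositions r).length := by simp [hsplit]
  have hget : (onesPositions r)[before.length] = m := by simp [hsplit]
  exact hnodup.getElem_inj_iff.1 hget

lemma zerosBefore_add_count_true_take (r : List Bool) {p : ℕ} (hp : p ≤ r.length) :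
    zerosBefore r p + (r.take p).count true = p := by
  rw [zerosBefore, List.count_false_add_count_true, List.length_take, min_eq_left hp]

lemma zerosBefore_mono (r : List Bool) {p q : ℕ} (h : p ≤ q) :
    zerosBefore r p ≤ zerosBefore r q := by
  rw [zerosBefore, zerosBefore, ← min_eq_left h, ← List.take_take]
  exact (List.take_sublist _ _).count_le _

lemma zerosBefore_pos {r : List Bool} (h0 : r.head? = some false) {j : ℕ} (hj : 0 < j) :
    0 < zerosBefore r j := by
  obtain ⟨t, rfl⟩ : ∃ t, r = false :: t := by
    cases r with
    | nil => simp at h0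
    | cons b t => simp_all
  obtain ⟨j, rfl⟩ := Nat.exists_eq_add_one_of_ne_zero hj.ne'
  simp [zerosBefore]

lemma zerosBefore_getElem_onesPositions (r : List Bool) {k : ℕ}
    (hk : k < (onesPositions r).length) :
    zerosBefore r (onesPositions r)[k] + k = (onesPositions r)[k] := by
  have hm := (mem_onesPositions.1 (List.getElem_mem hk)).1
  have := zerosBefore_add_count_true_take r hm.le
  rwa [← length_onesPositions, onesPositions_take r hm.le,
    length_filter_range_getElem_onesPositions r hk] at this

lemma shapeOf_eq_map_onesPositions {r : List Bool} (h0 : r.head? = some false) :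
    shapeOf r = ((onesPositions r).map (zerosBefore r) : Multiset ℕ) := by
  rw [shapeOf, onesPositions, ← List.filterMap_eq_map', List.filterMap_filter]
  refine congrArg _ (List.filterMap_congr fun j _ => ?_)
  by_cases hone : r.getD j false = true
  · have hj0 : j ≠ 0 := by
      rintro rfl
      cases r <;> simp_all
    rw [if_pos ⟨hone, zerosBefore_pos h0 (Nat.pos_of_ne_zero hj0)⟩, if_pos hone]
  · rw [if_neg fun h => hone h.1, if_neg hone]

lemma sort_shapeOf {r : List Bool} (h0 : r.head? = some false) :
    (shapeOf r).sort (· ≤ ·) = (onesPositions r).map (zerosBefore r) := by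
  rw [shapeOf_eq_map_onesPositions h0, Multiset.coe_sort]
  refine List.mergeSort_eq_self _ (List.pairwise_map.2 ?_)
  exact (pairwise_lt_onesPositions r).imp fun h => zerosBefore_mono r h.le

lemma betaSet_shapeOf {r : List Bool} (h0 : r.head? = some false) :
    betaSet (shapeOf r) = (onesPositions r).toFinset := by
  rw [betaSet, sort_shapeOf h0]
  congr 1
  refine List.ext_getElem (by simp) fun k hk _ => ?_
  simp only [List.length_map, List.length_range] at hk
  simp [List.getElem?_eq_getElem hk, zerosBefore_getElem_onesPositions r hk]

lemma getD_eq_decide_mem_betaSet_shapeOf {r : List Bool} (h0 : r.head? = some false) (j : ℕ) :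
    r.getD j false = decide (j ∈ betaSet (shapeOf r)) := by
  rw [betaSet_shapeOf h0]
  by_cases hj : j < r.length <;> simp [mem_onesPositions, hj]

lemma card_shapeOf {r : List Bool} (h0 : r.head? = some false) :
    Multiset.card (shapeOf r) = r.count true := by
  rw [shapeOf_eq_map_onesPositions h0, Multiset.coe_card, List.length_map, length_onesPositions]

end Words

section Dilation

variable {d : ℕ}

lemma sort_dilate (lam : Multiset ℕ) :
    (dilate d lam).sort (· ≤ ·) =
      (lam.sort (· ≤ ·)).flatMap fun p => List.replicate d (d * p) := by
  have hcoe : dilate d lam =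
      (((lam.sort (· ≤ ·)).flatMap fun p => List.replicate d (d * p) : List ℕ) :
        Multiset ℕ) := by
    rw [dilate, ← Multiset.coe_bind, Multiset.sort_eq]
    rfl
  rw [hcoe, Multiset.coe_sort]
  refine List.mergeSort_eq_self _ (List.pairwise_flatMap.2 ⟨fun p _ => ?_, ?_⟩)
  · exact List.pairwise_replicate.2 (Or.inr le_rfl)
  · refine (Multiset.pairwise_sort lam (· ≤ ·)).imp fun hpq x hx y hy => ?_
    rw [(List.mem_replicate.1 hx).2, (List.mem_replicate.1 hy).2]
    exact Nat.mul_le_mul_left d hpq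

lemma length_flatMap_replicate (L : List ℕ) :
    (L.flatMap fun p => List.replicate d (d * p)).length = d * L.length := by
  simp [List.length_flatMap, mul_comm]

lemma getD_flatMap_replicate (hd : 0 < d) (L : List ℕ) (m : ℕ) :
    (L.flatMap fun p => List.replicate d (d * p)).getD m 0 = d * L.getD (m / d) 0 := by
  induction L generalizing m with
  | nil => simp
  | cons p L ih =>
    rw [List.flatMap_cons]
    by_cases hm : m < d
    · rw [List.getD_append _ _ _ _ (by simpa using hm), List.getD_replicate _ hm,
        Nat.div_eq_of_lt hm, List.getD_cons_zero]
    · rw [List.getD_append_right _ _ _ _ (by simpa using hm), List.length_replicate, ih,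
        ← List.getD_cons_succ (x := p), ← Nat.add_div_right _ hd,
        Nat.sub_add_cancel (not_lt.1 hm)]

lemma mem_betaSet_dilate (hd : 0 < d) (lam : Multiset ℕ) (j : ℕ) :
    j ∈ betaSet (dilate d lam) ↔ j / d ∈ betaSet lam := by
  set L := lam.sort (· ≤ ·)
  simp only [betaSet, sort_dilate, List.mem_toFinset, List.mem_map, List.mem_range,
    length_flatMap_replicate, getD_flatMap_replicate hd]
  constructor
  · rintro ⟨m, hm, rfl⟩
    refine ⟨m / d, (Nat.div_lt_iff_lt_mul hd).2 (by rwa [mul_comm]), ?_⟩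
    rw [show d * L.getD (m / d) 0 + m = d * (L.getD (m / d) 0 + m / d) + m % d by
      rw [Nat.mul_add, Nat.add_assoc, Nat.div_add_mod], Nat.mul_add_div hd,
      Nat.div_eq_of_lt (Nat.mod_lt m hd), Nat.add_zero]
  · rintro ⟨i, hi, hij⟩
    refine ⟨d * i + j % d, ?_, ?_⟩
    · calc d * i + j % d < d * (i + 1) := by
            rw [Nat.mul_succ]
            exact Nat.add_lt_add_left (Nat.mod_lt j hd) _
        _ ≤ d * L.length := Nat.mul_le_mul_left d hi
    · rw [Nat.mul_add_div hd, Nat.div_eq_of_lt (Nat.mod_lt j hd), Nat.add_zero, ← Nat.add_assoc,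
        ← Nat.mul_add, hij, Nat.div_add_mod]

lemma card_dilate (lam : Multiset ℕ) :
    Multiset.card (dilate d lam) = d * Multiset.card lam := by
  simp [dilate, Multiset.card_bind, mul_comm]

end Dilation

section Cascades

lemma count_true_set_set {r : List Bool} {a b : ℕ} (hab : a ≠ b)
    (ha : r.getD a true = false) (hb : r.getD b false = true) :
    ((r.set a true).set b false).count true = r.count true := by
  have ha' : a < r.length := by
    by_contra h
    rw [List.getD_eq_default _ _ (not_lt.1 h)] at ha
    exact Bool.noConfusion ha
  have hb' : b < r.length := by
    by_contra h
    rw [List.getD_eq_default _ _ (not_lt.1 h)] at hb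
    exact Bool.noConfusion hb
  rw [List.getD_eq_getElem _ _ ha'] at ha
  rw [List.getD_eq_getElem _ _ hb'] at hb
  rw [List.count_set (by simpa using hb'), List.count_set ha', List.getElem_set_ne hab, ha, hb]
  simp

lemma length_applySwaps (r : List Bool) (s : List (ℕ × ℕ)) :
    (applySwaps r s).length = r.length := by
  induction s generalizing r with
  | nil => rfl
  | cons ab s ih =>
    simp only [applySwaps, List.foldl_cons] at ih ⊢
    rw [ih, List.length_set, List.length_set]

lemma length_cascadeRow (C : Cascade) (i : ℕ) : (cascadeRow C i).length = C.top.length :=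
  length_applySwaps _ _

lemma cascadeRow_succ (C : Cascade) {i : ℕ} (hi : i < C.swaps.length) :
    cascadeRow C (i + 1) =
      ((cascadeRow C i).set (C.swaps.getD i (0, 0)).1 true).set
        (C.swaps.getD i (0, 0)).2 false := by
  rw [cascadeRow, cascadeRow, List.take_add_one, List.getElem?_eq_getElem hi,
    List.getD_eq_getElem _ _ hi]
  simp only [applySwaps, Option.toList_some, List.foldl_append, List.foldl_cons, List.foldl_nil]

lemma Cascade.Valid.count_true_cascadeRow {C : Cascade} (hv : C.Valid) {i : ℕ}
    (hi : i ≤ C.swaps.length) : (cascadeRow C i).count true = C.top.count true := by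
  induction i with
  | zero => rfl
  | succ i ih =>
    obtain ⟨hab, -, ha, hb⟩ := hv.2.2.1 i hi
    rw [cascadeRow_succ C hi, count_true_set_set hab.ne ha hb, ih (Nat.le_of_succ_le hi)]

lemma Cascade.Valid.count_true_cascadeBot {C : Cascade} (hv : C.Valid) :
    (cascadeBot C).count true = C.top.count true := by
  rw [← hv.count_true_cascadeRow le_rfl, cascadeRow, List.take_length, cascadeBot]

end Cascades

section Action

variable {d : ℕ}

lemma gammaMap_eq_add_of_dvd_sub (σ : Equiv.Perm (Fin d)) {a b : ℕ} (hab : a ≤ b)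
    (hdvd : d ∣ b - a) : gammaMap d σ b = gammaMap d σ a + (b - a) := by
  rw [← gammaMap_add_of_dvd σ a hdvd, Nat.add_sub_cancel' hab]

lemma actC_one (C : Cascade) : actC d 1 C = C := by
  simp [actC, permuteCols_one, gammaMap_one]

lemma actC_mul (σ τ : Equiv.Perm (Fin d)) {C : Cascade} (hC : d ∣ C.top.length) :
    actC d (σ * τ) C = actC d σ (actC d τ C) := by
  simp [actC, permuteCols_mul σ τ hC, gammaMap_mul, Function.comp_def]

lemma cascadeRow_actC (σ : Equiv.Perm (Fin d)) {C : Cascade} (hC : d ∣ C.top.length) (i : ℕ) :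
    cascadeRow (actC d σ C) i = permuteCols d σ (cascadeRow C i) := by
  rw [cascadeRow, cascadeRow, permuteCols_applySwaps σ hC, actC, List.map_take]

lemma cascadeBot_actC (σ : Equiv.Perm (Fin d)) {C : Cascade} (hC : d ∣ C.top.length) :
    cascadeBot (actC d σ C) = permuteCols d σ (cascadeBot C) := by
  rw [cascadeBot, cascadeBot, permuteCols_applySwaps σ hC, actC]

lemma Cascade.Valid.fst_lt_snd {C : Cascade} (hv : C.Valid) {ab : ℕ × ℕ}
    (hab : ab ∈ C.swaps) : ab.1 < ab.2 := by
  obtain ⟨i, hi, rfl⟩ := List.getElem_of_mem hab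
  simpa [List.getElem?_eq_getElem hi] using (hv.2.2.1 i hi).1

lemma cascadeShape_actC (σ : Equiv.Perm (Fin d)) {C : Cascade} (hC : IsBlockConst d C.top) :
    cascadeShape (actC d σ C) = cascadeShape C := by
  rw [cascadeShape, actC, hC.permuteCols_eq, cascadeShape]

lemma cascadeContent_actC (σ : Equiv.Perm (Fin d)) {C : Cascade} (hv : C.Valid)
    (hdvd : ∀ ab ∈ C.swaps, d ∣ ab.2 - ab.1) :
    cascadeContent (actC d σ C) = cascadeContent C := by
  simp only [cascadeContent, actC, List.map_map]
  refine List.map_congr_left fun ab hab => ?_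
  simp only [Function.comp_apply]
  rw [gammaMap_eq_add_of_dvd_sub σ (hv.fst_lt_snd hab).le (hdvd ab hab)]
  omega

lemma isBlockConst_top (hd : 0 < d) {lam : Multiset ℕ} {C : Cascade} (hv : C.Valid)
    (hs : cascadeShape C = dilate d lam) : IsBlockConst d C.top := by
  intro i j hij
  have hs' : shapeOf C.top = dilate d lam := hs
  simp only [getD_eq_decide_mem_betaSet_shapeOf hv.1, hs', mem_betaSet_dilate hd, hij]

lemma count_true_top {lam : Multiset ℕ} {C : Cascade} (hv : C.Valid)
    (hs : cascadeShape C = dilate d lam) : C.top.count true = d * Multiset.card lam := by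
  rw [← card_shapeOf hv.1, ← card_dilate, ← hs, cascadeShape]

lemma valid_actC (hd : 0 < d) (σ : Equiv.Perm (Fin d)) {C : Cascade} (hv : C.Valid)
    (htop : IsBlockConst d C.top) (hcount : d ∣ C.top.count true)
    (hdvd : ∀ ab ∈ C.swaps, d ∣ ab.2 - ab.1) : (actC d σ C).Valid := by
  have hbotcount := hv.count_true_cascadeBot
  obtain ⟨hhead, hlast, hswaps, u, v, hbot⟩ := hv
  have hlen : d ∣ C.top.length := htop.dvd_length hd hlast
  have hu : d ∣ u := by
    rw [hbot] at hbotcount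
    simpa [← hbotcount, List.count_replicate] using hcount
  have htop' : (actC d σ C).top = C.top := htop.permuteCols_eq σ
  refine ⟨htop' ▸ hhead, htop' ▸ hlast, fun i hi => ?_, u, v, ?_⟩
  · have hi' : i < C.swaps.length := by simpa [actC] using hi
    obtain ⟨hab, hb, ha0, hb1⟩ := hswaps i hi'
    set ab := C.swaps.getD i (0, 0)
    have hmem : ab ∈ C.swaps := by simp [ab, List.getElem?_eq_getElem hi']
    have hget : (actC d σ C).swaps.getD i (0, 0) = (gammaMap d σ ab.1, gammaMap d σ ab.2) := by
      simp [actC, ab, List.getElem?_eq_getElem hi']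
    have hrow : d ∣ (cascadeRow C i).length := by rwa [length_cascadeRow]
    rw [hget, cascadeRow_actC σ hlen, getD_permuteCols_gammaMap σ hrow,
      getD_permuteCols_gammaMap σ hrow, length_permuteCols, gammaMap_lt_iff σ hrow,
      gammaMap_eq_add_of_dvd_sub σ hab.le (hdvd ab hmem)]
    exact ⟨by omega, hb, ha0, hb1⟩
  · rw [cascadeBot_actC σ hlen, hbot, (isBlockConst_replicate_append hu v).permuteCols_eq]

end Action

theorem action_on_cascades_general (d : ℕ) (hd : 0 < d)
    (lam : Multiset ℕ)
    (alpha : List ℕ) (halpha : ∀ a ∈ alpha, 0 < a ∧ d ∣ a) :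
    (∀ (σ : Equiv.Perm (Fin d)) (C : Cascade),
      C.Valid → cascadeShape C = dilate d lam → cascadeContent C = alpha →
        (actC d σ C).Valid ∧ cascadeShape (actC d σ C) = dilate d lam ∧
          cascadeContent (actC d σ C) = alpha) ∧
    (∀ C : Cascade,
      C.Valid → cascadeShape C = dilate d lam → cascadeContent C = alpha →
        actC d 1 C = C) ∧
    (∀ (σ τ : Equiv.Perm (Fin d)) (C : Cascade),
      C.Valid → cascadeShape C = dilate d lam → cascadeContent C = alpha →
        actC d (σ * τ) C = actC d σ (actC d τ C)) := by
  refine ⟨fun σ C hv hs hc => ?_, fun C _ _ _ => actC_one C,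
    fun σ τ C hv hs _ => actC_mul σ τ ((isBlockConst_top hd hv hs).dvd_length hd hv.2.1)⟩
  have htop := isBlockConst_top hd hv hs
  have hdvd : ∀ ab ∈ C.swaps, d ∣ ab.2 - ab.1 := fun ab hab =>
    (halpha _ (hc ▸ List.mem_map_of_mem hab)).2
  refine ⟨valid_actC hd σ hv htop ⟨_, count_true_top hv hs⟩ hdvd, ?_, ?_⟩
  · rw [cascadeShape_actC σ htop, hs]
  · rw [cascadeContent_actC σ hv hdvd, hc]

/-- The pairing (σ, C) ↦ C·Φ(σ)⁻¹ defines an action of S_d on the set of cascades of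
shape 𝝀 and content α: it maps the set to itself, the identity acts trivially, and the
pairing is compatible with multiplication. -/
theorem action_on_cascades (d n : ℕ) (hd : 0 < d) (hn : 0 < n)
    (lam : Multiset ℕ) (hlam : IsPartitionOf n lam)
    (alpha : List ℕ) (halpha : ∀ a ∈ alpha, 0 < a ∧ d ∣ a) (hsum : alpha.sum = d ^ 2 * n) :
    (∀ (σ : Equiv.Perm (Fin d)) (C : Cascade),
      C.Valid → cascadeShape C = dilate d lam → cascadeContent C = alpha →
        (actC d σ C).Valid ∧ cascadeShape (actC d σ C) = dilate d lam ∧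
          cascadeContent (actC d σ C) = alpha) ∧
    (∀ C : Cascade,
      C.Valid → cascadeShape C = dilate d lam → cascadeContent C = alpha →
        actC d 1 C = C) ∧
    (∀ (σ τ : Equiv.Perm (Fin d)) (C : Cascade),
      C.Valid → cascadeShape C = dilate d lam → cascadeContent C = alpha →
        actC d (σ * τ) C = actC d σ (actC d τ C)) :=
  action_on_cascades_general d hd lam alpha halpha
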